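/- arXiv:math/0012084 — 7 statements merged into one kernel-verified Lean document; each statement's English description precedes it below -/
import Mathlib

section
/- If L is a transfer operator for (A, α), then the range of L is a two-sided ideal of A. -/
open scoped ComplexStarModule

/-- If `L` is a transfer operator for `(A, α)`, then the range of `L` is a two-sided ideal. -/
theorem transfer_range_twoSided_ideal
    {A : Type*} [CStarAlgebra A] [PartialOrder A] [StarOrderedRing A]
    (α : A →⋆ₐ[ℂ] A) (L : A →L[ℂ] A)
    (hpos : ∀ a : A, 0 ≤ a → 0 ≤ L a)
    (htr : ∀ a b : A, L (α a * b) = a * L b) :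
    ∀ b : A, ∀ x ∈ Set.range L, b * x ∈ Set.range L ∧ x * b ∈ Set.range L := by
  have hsa : ∀ p : A, 0 ≤ p → star (L p) = L p := fun p hp =>
    (IsSelfAdjoint.of_nonneg (hpos p hp)).star_eq
  have hstar : ∀ a : A, L (star a) = star (L a) := by
    intro a
    have h := CStarAlgebra.linear_combination_nonneg a
    rw [← h]
    have h1 := CFC.posPart_nonneg (ℜ a : A)
    have h2 := CFC.negPart_nonneg (ℜ a : A)
    have h3 := CFC.posPart_nonneg (ℑ a : A)
    have h4 := CFC.negPart_nonneg (ℑ a : A)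
    simp only [star_add, star_sub, star_smul, Complex.star_def, Complex.conj_I,
      map_add, map_sub, map_smul, (IsSelfAdjoint.of_nonneg h1).star_eq,
      (IsSelfAdjoint.of_nonneg h2).star_eq, (IsSelfAdjoint.of_nonneg h3).star_eq,
      (IsSelfAdjoint.of_nonneg h4).star_eq, hsa _ h1, hsa _ h2, hsa _ h3, hsa _ h4]

  rintro b x ⟨c, rfl⟩
  refine ⟨⟨α b * c, htr b c⟩, ⟨star (α (star b) * star c), ?_⟩⟩
  rw [hstar, htr, star_mul, star_star, hstar, star_star]
end

section
/- Let L be a transfer operator for (A, α) and let R = α(A). The following conditions are equivalent: (i) the composition E = α ∘ L is a conditional expectation onto R (i.e. E restricts to the identity on R); (ii) α ∘ L ∘ α = α; (iii) α(L(1)) = α(1). -/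
/-- For a transfer operator `L` with `R = α(A)`, the following are equivalent:
(i) `E = α ∘ L` is a conditional expectation onto `R` (it maps into `R` and restricts to the
identity on `R`); (ii) `α ∘ L ∘ α = α`; (iii) `α (L 1) = α 1`. -/
theorem transfer_nondegenerate_tfae
    {A : Type*} [CStarAlgebra A] [PartialOrder A] [StarOrderedRing A]
    (α : A →⋆ₐ[ℂ] A) (L : A →L[ℂ] A)
    (hpos : ∀ a : A, 0 ≤ a → 0 ≤ L a)
    (htr : ∀ a b : A, L (α a * b) = a * L b) :
    (((∀ a : A, α (L a) ∈ Set.range α) ∧ (∀ r ∈ Set.range α, α (L r) = r)) ↔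
      (∀ a : A, α (L (α a)) = α a)) ∧
    ((∀ a : A, α (L (α a)) = α a) ↔ α (L 1) = α 1) := by
  constructor
  · constructor
    · rintro ⟨-, h⟩ a
      exact h (α a) ⟨a, rfl⟩
    · intro h
      exact ⟨fun a => ⟨L a, rfl⟩, by rintro r ⟨a, rfl⟩; exact h a⟩
  · constructor
    · intro h
      simpa using h 1
    · intro h a
      have : L (α a) = a * L 1 := by
        have := htr a 1
        rwa [mul_one] at this
      rw [this, map_mul, h, map_one, mul_one]
end

section
/- If L is a transfer operator for (A, α) satisfying α ∘ L ∘ α = α (non-degeneracy), then A decomposes as the direct sum of ideals A = ker(α) ⊕ Im(L); explicitly, every a ∈ A can be written uniquely as a = (a − L(α(a))) + L(α(a)) with a − L(α(a)) ∈ ker(α) and L(α(a)) ∈ Im(L), and ker(α)·Im(L) = 0. -/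
open Complex ComplexStarModule


/-- For a non-degenerate transfer operator `L`, the algebra `A` decomposes as the direct sum of
the ideals `ker α` and `Im L`: every `a` writes uniquely as a sum of an element of `ker α` and an
element of `Im L`, explicitly `a = (a - L (α a)) + L (α a)`, and `ker α · Im L = 0`. -/
theorem transfer_nondegenerate_direct_sum
    {A : Type*} [CStarAlgebra A] [PartialOrder A] [StarOrderedRing A]
    (α : A →⋆ₐ[ℂ] A) (L : A →L[ℂ] A)
    (hpos : ∀ a : A, 0 ≤ a → 0 ≤ L a)
    (htr : ∀ a b : A, L (α a * b) = a * L b)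
    (hnd : ∀ a : A, α (L (α a)) = α a) :
    (∀ a : A, α (a - L (α a)) = 0 ∧ L (α a) ∈ Set.range L) ∧
    (∀ a x y : A, α x = 0 → y ∈ Set.range L → a = x + y →
      x = a - L (α a) ∧ y = L (α a)) ∧
    (∀ x y : A, α x = 0 → y ∈ Set.range L → x * y = 0) := by
  -- L is star-preserving
  have hsa : ∀ a : A, IsSelfAdjoint a → IsSelfAdjoint (L a) := by
    intro a ha
    rw [← CFC.posPart_sub_negPart a ha, map_sub]
    exact ((hpos _ (CFC.posPart_nonneg a)).isSelfAdjoint).sub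
      ((hpos _ (CFC.negPart_nonneg a)).isSelfAdjoint)
  have hstar : ∀ a : A, L (star a) = star (L a) := by
    intro a
    have hdecomp : (ℜ a : A) + I • (ℑ a : A) = a := realPart_add_I_smul_imaginaryPart a
    have hstar_a : star a = (ℜ a : A) - I • (ℑ a : A) := by
      conv_lhs => rw [← hdecomp]
      rw [star_add, star_smul, (ℜ a).2, (ℑ a).2]
      simp [Complex.conj_I, sub_eq_add_neg]
    have h1 := hsa _ (ℜ a).2
    have h2 := hsa _ (ℑ a).2
    rw [hstar_a, map_sub, map_smul]
    conv_rhs => rw [← hdecomp]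
    rw [map_add, map_smul, star_add, star_smul, h1.star_eq, h2.star_eq]
    simp [Complex.conj_I, sub_eq_add_neg]
  -- ker α annihilates range of L
  have hann : ∀ x y : A, α x = 0 → y ∈ Set.range L → x * y = 0 := by
    rintro x y hx ⟨b, rfl⟩
    have := htr x b
    rwa [hx, zero_mul, map_zero, eq_comm] at this
  -- L ∘ α ∘ L = L
  have hLaL : ∀ b : A, L (α (L b)) = L b := by
    intro b
    set d := L b - L (α (L b)) with hd
    have hdker : α d = 0 := by
      rw [hd, map_sub, hnd]; simp
    have hdrange : d ∈ Set.range L := ⟨b - α (L b), by rw [map_sub]⟩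
    have hdstar : α (star d) = 0 := by rw [map_star, hdker, star_zero]
    have : star d * d = 0 := hann _ _ hdstar hdrange
    have hd0 : d = 0 := by
      have hn := CStarRing.norm_star_mul_self (x := d)
      rw [this, norm_zero] at hn
      have : ‖d‖ = 0 := by nlinarith [norm_nonneg d]
      simpa [norm_eq_zero] using this
    rw [hd] at hd0
    exact (sub_eq_zero.mp hd0).symm
  refine ⟨?_, ?_, hann⟩
  · intro a
    constructor
    · rw [map_sub, hnd, sub_self]
    · exact ⟨α a, rfl⟩
  · rintro a x y hx ⟨b, rfl⟩ rfl
    have hy : L (α (x + L b)) = L b := by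
      rw [map_add, hx, zero_add, hLaL]
    exact ⟨by rw [hy]; abel, hy.symm⟩
end

section
/- Suppose E : A → R is a positive conditional expectation onto the range R = α(A), and J is an ideal of A such that A = J ⊕ ker(α) as a direct sum. Let β : R → J be the inverse of the restriction α|_J : J → R. Then L = β ∘ E is a non-degenerate transfer operator for (A, α), and moreover α ∘ L = E. -/
private lemma aux_map_negPart {A : Type*} [CStarAlgebra A] [PartialOrder A]
    [StarOrderedRing A] (α : A →⋆ₐ[ℂ] A) (hαc : Continuous α) (a : A)
    (ha : IsSelfAdjoint a) : α (a⁻) = (α a)⁻ := by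
  rw [CFC.negPart_def, CFC.negPart_def]
  exact NonUnitalStarAlgHomClass.map_cfcₙ α _ a (hφ := hαc)

/-- Suppose `E : A → A` is a positive conditional expectation onto `R = α(A)`, and `J` is a
closed two-sided ideal with `A = J ⊕ ker α`, so that `α|_J : J → R` is a bijection with inverse
`β`.  Then `L = β ∘ E` is a non-degenerate transfer operator for `(A, α)` with `α ∘ L = E`. -/
theorem transfer_of_conditional_expectation
    {A : Type*} [CStarAlgebra A] [PartialOrder A] [StarOrderedRing A]
    (α : A →⋆ₐ[ℂ] A)
    -- `E` is a positive conditional expectation onto `R = α(A)`: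
    (E : A →L[ℂ] A)
    (hEr : ∀ a : A, E a ∈ Set.range α)
    (hEid : ∀ r ∈ Set.range α, E r = r)
    (hEpos : ∀ a : A, 0 ≤ a → 0 ≤ E a)
    (hEbimod : ∀ a : A, ∀ r ∈ Set.range α, E (a * r) = E a * r ∧ E (r * a) = r * E a)
    -- `J` is a closed two-sided ideal with `A = J ⊕ ker α`:
    (J : Submodule ℂ A)
    (hJclosed : IsClosed (J : Set A))
    (hJideal : ∀ a ∈ J, ∀ b : A, a * b ∈ J ∧ b * a ∈ J)
    (hsum : ∀ a : A, ∃ j ∈ J, ∃ k : A, α k = 0 ∧ a = j + k)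
    (hdisj : ∀ a ∈ J, α a = 0 → a = 0)
    -- `β : R → J` is the inverse of the restriction `α|_J : J → R`:
    (β : A → A)
    (hβJ : ∀ r ∈ Set.range α, β r ∈ J)
    (hβinv : ∀ r ∈ Set.range α, α (β r) = r)
    (hβα : ∀ j ∈ J, β (α j) = j) :
    -- then `L = β ∘ E` is a non-degenerate transfer operator with `α ∘ L = E`:
    (∀ a b : A, β (E (a + b)) = β (E a) + β (E b)) ∧
    (∀ (c : ℂ) (a : A), β (E (c • a)) = c • β (E a)) ∧
    Continuous (fun a : A => β (E a)) ∧
    (∀ a : A, 0 ≤ a → 0 ≤ β (E a)) ∧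
    (∀ a b : A, β (E (α a * b)) = a * β (E b)) ∧
    (∀ a : A, α (β (E (α a))) = α a) ∧
    (∀ a : A, α (β (E a)) = E a) := by
  -- α is continuous
  have hαc : Continuous α := by
    refine AddMonoidHomClass.continuous_of_bound α 1 (fun a => ?_)
    simpa using NonUnitalStarAlgHom.norm_apply_le α a
  -- uniqueness in J
  have uniq : ∀ x ∈ J, ∀ y ∈ J, α x = α y → x = y := by
    intro x hx y hy hxy
    have h : x - y = 0 := hdisj _ (J.sub_mem hx hy) (by simp [map_sub, hxy])
    exact sub_eq_zero.mp h
  -- characterization of β on the range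
  have hβ_eq : ∀ r ∈ Set.range α, ∀ j ∈ J, α j = r → β r = j := by
    intro r hr j hj hjr
    exact uniq _ (hβJ r hr) _ hj (by rw [hβinv r hr, hjr])
  -- products of J with ker α vanish
  have hJK : ∀ j ∈ J, ∀ k : A, α k = 0 → j * k = 0 ∧ k * j = 0 := by
    intro j hj k hk
    constructor
    · exact hdisj _ ((hJideal j hj k).1) (by simp [map_mul, hk])
    · exact hdisj _ ((hJideal j hj k).2) (by simp [map_mul, hk])
  -- J is star-closed
  have hJstar : ∀ j ∈ J, star j ∈ J := by
    intro j hj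
    obtain ⟨j₁, hj₁, k₁, hk₁, hdec⟩ := hsum (star j)
    -- star j = j₁ + k₁; show k₁ = 0
    have hk₁star : α (star k₁) = 0 := by rw [map_star, hk₁, star_zero]
    have h1 : star j * star k₁ = 0 := by
      have : k₁ * j = 0 := (hJK j hj k₁ hk₁).2
      calc star j * star k₁ = star (k₁ * j) := by rw [star_mul]
        _ = 0 := by rw [this, star_zero]
    have h2 : j₁ * star k₁ = 0 := (hJK j₁ hj₁ (star k₁) hk₁star).1
    have h3 : k₁ * star k₁ = 0 := by
      have := congrArg (fun x => x * star k₁) hdec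
      simp only [add_mul] at this
      rw [h1, h2, zero_add] at this
      exact this.symm
    have hk₁0 : k₁ = 0 := by
      have hnorm : ‖k₁‖ * ‖k₁‖ = 0 := by
        rw [← CStarRing.norm_self_mul_star, h3, norm_zero]
      have : ‖k₁‖ = 0 := by nlinarith [norm_nonneg k₁]
      exact norm_eq_zero.mp this
    rw [hdec, hk₁0, add_zero]; exact hj₁
  -- additivity
  have hadd : ∀ a b : A, β (E (a + b)) = β (E a) + β (E b) := by
    intro a b
    refine hβ_eq _ (hEr (a + b)) _
      (J.add_mem (hβJ _ (hEr a)) (hβJ _ (hEr b))) ?_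
    rw [map_add, hβinv _ (hEr a), hβinv _ (hEr b), map_add]
  -- scalar multiplication
  have hsmul : ∀ (c : ℂ) (a : A), β (E (c • a)) = c • β (E a) := by
    intro c a
    refine hβ_eq _ (hEr (c • a)) _ (J.smul_mem c (hβJ _ (hEr a))) ?_
    rw [map_smul, hβinv _ (hEr a), map_smul]
  -- α ∘ L = E
  have hαL : ∀ a : A, α (β (E a)) = E a := fun a => hβinv _ (hEr a)
  -- continuity via the closed graph theorem
  have hcont : Continuous (fun a : A => β (E a)) := by
    let g : A →ₗ[ℂ] A :=
      { toFun := fun a => β (E a)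
        map_add' := hadd
        map_smul' := hsmul }
    have hgraph : (g.graph : Set (A × A)) =
        {p : A × A | p.2 ∈ (J : Set A)} ∩ {p : A × A | α p.2 - E p.1 = 0} := by
      ext ⟨a, b⟩
      simp only [Set.mem_inter_iff, Set.mem_setOf_eq, SetLike.mem_coe,
        LinearMap.mem_graph_iff]
      constructor
      · rintro rfl
        refine ⟨hβJ _ (hEr a), ?_⟩
        show α (β (E a)) - E a = 0
        rw [hαL a, sub_self]
      · rintro ⟨hbJ, hb⟩
        have hb' : α b = E a := by rwa [sub_eq_zero] at hb
        exact (hβ_eq _ (hEr a) b hbJ hb').symm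
    have hclosed : IsClosed (g.graph : Set (A × A)) := by
      rw [hgraph]
      exact (hJclosed.preimage continuous_snd).inter
        (isClosed_eq ((hαc.comp continuous_snd).sub (E.continuous.comp continuous_fst))
          continuous_const)
    have := (ContinuousLinearMap.ofIsClosedGraph hclosed).continuous
    rwa [ContinuousLinearMap.coeFn_ofIsClosedGraph] at this
  -- positivity
  have hpos : ∀ a : A, 0 ≤ a → 0 ≤ β (E a) := by
    intro a ha
    set y : A := E a with hy_def
    have hy : 0 ≤ y := hEpos a ha
    have hyr : y ∈ Set.range α := hEr a
    set y' : A := β y with hy'_def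
    have hy'J : y' ∈ J := hβJ _ hyr
    have hy'α : α y' = y := hβinv _ hyr
    have hysa : IsSelfAdjoint y := IsSelfAdjoint.of_nonneg hy
    have hy'sa : IsSelfAdjoint y' := by
      have h1 : star y' ∈ J := hJstar _ hy'J
      have h2 : α (star y') = α y' := by rw [map_star, hy'α, hysa.star_eq]
      exact uniq _ h1 _ hy'J h2
    -- negative part of y'
    set n : A := y'⁻ with hn_def
    have hn_nonneg : 0 ≤ n := CFC.negPart_nonneg y'
    have hnsa : IsSelfAdjoint n := IsSelfAdjoint.of_nonneg hn_nonneg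
    have hαn : α n = 0 := by
      rw [hn_def, aux_map_negPart α hαc y' hy'sa, hy'α]
      exact (CFC.negPart_eq_zero_iff y hysa).mpr hy
    have hdecomp : y'⁺ - n = y' := CFC.posPart_sub_negPart y' hy'sa
    have hnp : n * y'⁺ = 0 := CFC.negPart_mul_posPart y'
    have hny' : n * y' = -(n * n) := by
      rw [← hdecomp, mul_sub, hnp, zero_sub]
    have hnnJ : n * n ∈ J := by
      have h1 : n * y' ∈ J := (hJideal y' hy'J n).2
      rw [hny'] at h1
      simpa using J.neg_mem h1
    have hnn0 : n * n = 0 := hdisj _ hnnJ (by rw [map_mul, hαn, zero_mul])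
    have hn0 : n = 0 := by
      have hnorm : ‖n‖ * ‖n‖ = 0 := by
        rw [← CStarRing.norm_star_mul_self, hnsa.star_eq, hnn0, norm_zero]
      have : ‖n‖ = 0 := by nlinarith [norm_nonneg n]
      exact norm_eq_zero.mp this
    have h5 : y' = y'⁺ := by
      conv_lhs => rw [← hdecomp]
      rw [hn0, sub_zero]
    show (0 : A) ≤ y'
    exact le_of_le_of_eq (CFC.posPart_nonneg y') h5.symm
  -- transfer identity
  have htrans : ∀ a b : A, β (E (α a * b)) = a * β (E b) := by
    intro a b
    have h1 : E (α a * b) = α a * E b := (hEbimod b (α a) ⟨a, rfl⟩).2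
    obtain ⟨x, hx⟩ := hEr b
    have h2 : α a * E b ∈ Set.range α := ⟨a * x, by rw [map_mul, hx]⟩
    have h3 : a * β (E b) ∈ J := (hJideal _ (hβJ _ (hEr b)) a).2
    have h4 : α (a * β (E b)) = α a * E b := by rw [map_mul, hαL b]
    rw [h1]
    exact hβ_eq _ h2 _ h3 h4
  exact ⟨hadd, hsmul, hcont, hpos, htrans,
    fun a => by rw [hαL (α a), hEid _ ⟨a, rfl⟩], hαL⟩
end

section
/- Let L be a transfer operator for (A, α) and n ≥ 0. For x ∈ A, consider the semi-inner products ⟨x, y⟩_n = L^n(x*y). Then for all x ∈ A one has ⟨α(x), α(x)⟩_{n+1} = L^n(x*·L(1)·x) ≤ ‖L(1)‖ · ⟨x, x⟩_n, so the map x ↦ α(x) from (A, ⟨·,·⟩_n) to (A, ⟨·,·⟩_{n+1}) is bounded with norm at most ‖L(1)‖^{1/2}. -/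
/-!
A positive linear map on a C⋆-algebra is star-preserving, so taking adjoints in the defining
identity `L (α a * b) = a * L b` gives its mirror image `L (b * α a) = L b * a`. Together they
compute `L (α(x)* α(x)) = L (α(x*) · 1 · α(x)) = x* L(1) x`. Since `L 1 ≥ 0` we have
`x* L(1) x ≤ ‖L 1‖ • x* x`, and this survives `Lⁿ`, which is monotone and real-linear.
-/

namespace TransferOperator

variable {R F G : Type*} [Monoid R] [StarMul R] [FunLike F R R] [StarHomClass F R R]
  [FunLike G R R] [StarHomClass G R R] {α : F} {L : G}

theorem map_mul_right (htr : ∀ a b, L (α a * b) = a * L b) (a b : R) :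
    L (b * α a) = L b * a := by
  simpa only [map_star, ← star_mul, star_inj] using htr (star a) (star b)

theorem map_star_map_mul_map (htr : ∀ a b, L (α a * b) = a * L b) (x : R) :
    L (star (α x) * α x) = star x * L 1 * x := by
  rw [← map_star, htr, ← one_mul (α x), map_mul_right htr, mul_assoc]

end TransferOperator

/-- With the semi-inner products `⟨x, y⟩ₙ = Lⁿ (x* y)`, one has
`⟨α x, α x⟩ₙ₊₁ = Lⁿ (x* L(1) x) ≤ ‖L 1‖ • ⟨x, x⟩ₙ`, so that `x ↦ α x` is bounded with norm at
most `‖L 1‖^{1/2}`. -/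
theorem transfer_gamma_bounded
    {A : Type*} [CStarAlgebra A] [PartialOrder A] [StarOrderedRing A]
    (α : A →⋆ₐ[ℂ] A) (L : A →L[ℂ] A)
    (hpos : ∀ a : A, 0 ≤ a → 0 ≤ L a)
    (htr : ∀ a b : A, L (α a * b) = a * L b)
    (n : ℕ) :
    ∀ x : A,
      (⇑L)^[n + 1] (star (α x) * α x) = (⇑L)^[n] (star x * L 1 * x) ∧
      (⇑L)^[n + 1] (star (α x) * α x) ≤ ‖L 1‖ • (⇑L)^[n] (star x * x) := by
  intro x
  let P : A →ₚ[ℂ] A := .mk₀ L.toLinearMap hpos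
  have hfirst : L (star (α x) * α x) = star x * L 1 * x :=
    TransferOperator.map_star_map_mul_map (L := P) htr x
  have hL1 : IsSelfAdjoint (L 1) := (hpos 1 zero_le_one).isSelfAdjoint
  have hsmul : Function.Commute (⇑L) (‖L 1‖ • ·) := L.map_smul_of_tower ‖L 1‖
  rw [Function.iterate_succ_apply, hfirst]
  refine ⟨rfl, ?_⟩
  calc (⇑L)^[n] (star x * L 1 * x) ≤ (⇑L)^[n] (‖L 1‖ • (star x * x)) :=
        (OrderHomClass.mono P).iterate n (CStarAlgebra.star_left_conjugate_le_norm_smul hL1)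
    _ = ‖L 1‖ • (⇑L)^[n] (star x * x) := (hsmul.iterate_left n) _
end

section
/- Let α : A → A be an injective *-endomorphism whose range R = α(A) is hereditary, and P = α(1). Then the map L(a) = α⁻¹(P·a·P) (where α⁻¹ is the inverse of α onto its range) is a well-defined non-degenerate transfer operator for (A, α) with L(1) = 1. -/
open scoped ComplexStarModule

/-- If `α` is an injective *-endomorphism with hereditary range `R = α(A)`, `P = α 1`, then the
map `L a = α⁻¹ (P a P)` is well defined and is a non-degenerate transfer operator for `(A, α)`
with `L 1 = 1`. -/
theorem transfer_of_hereditary_monomorphism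
    {A : Type*} [CStarAlgebra A] [PartialOrder A] [StarOrderedRing A]
    (α : A →⋆ₐ[ℂ] A)
    (hinj : Function.Injective α)
    (hher : ∀ a b : A, b ∈ Set.range α → 0 ≤ a → a ≤ b → a ∈ Set.range α) :
    -- well-definedness: `P a P` lies in the range of `α`, so `α⁻¹ (P a P)` makes sense
    (∀ a : A, α 1 * a * α 1 ∈ Set.range α) ∧
    -- and the resulting map `L` is a non-degenerate transfer operator with `L 1 = 1`:
    (∀ L : A → A, (∀ a : A, α (L a) = α 1 * a * α 1) →
      (∀ a b : A, L (a + b) = L a + L b) ∧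
      (∀ (c : ℂ) (a : A), L (c • a) = c • L a) ∧
      Continuous L ∧
      (∀ a : A, 0 ≤ a → 0 ≤ L a) ∧
      (∀ a b : A, L (α a * b) = a * L b) ∧
      (∀ a : A, α (L (α a)) = α a) ∧
      L 1 = 1) := by
  set P := α 1 with hP
  have hPstar : star P = P := by rw [hP, ← map_star, star_one]
  have hPP : P * P = P := by rw [hP, ← map_mul, one_mul]
  -- closure properties of the range
  have hsub : ∀ x y : A, x ∈ Set.range α → y ∈ Set.range α → x - y ∈ Set.range α := by
    rintro _ _ ⟨u, rfl⟩ ⟨v, rfl⟩; exact ⟨u - v, map_sub α u v⟩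
  have haddR : ∀ x y : A, x ∈ Set.range α → y ∈ Set.range α → x + y ∈ Set.range α := by
    rintro _ _ ⟨u, rfl⟩ ⟨v, rfl⟩; exact ⟨u + v, map_add α u v⟩
  have hsmulR : ∀ (c : ℂ) (x : A), x ∈ Set.range α → c • x ∈ Set.range α := by
    rintro c _ ⟨u, rfl⟩; exact ⟨c • u, map_smul α c u⟩
  -- positive case of well-definedness
  have hpos : ∀ a : A, 0 ≤ a → P * a * P ∈ Set.range α := by
    intro a ha
    have hsa : IsSelfAdjoint a := ha.isSelfAdjoint
    have h0 : 0 ≤ P * a * P := by simpa [hPstar] using star_left_conjugate_nonneg ha P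
    refine hher _ (α ((‖a‖ : ℂ) • 1)) ⟨_, rfl⟩ h0 ?_
    have h1 : a ≤ algebraMap ℝ A ‖a‖ := IsSelfAdjoint.le_algebraMap_norm_self hsa
    have h2 := star_left_conjugate_le_conjugate h1 P
    rw [hPstar] at h2
    calc P * a * P ≤ P * algebraMap ℝ A ‖a‖ * P := h2
      _ = α ((‖a‖ : ℂ) • 1) := by
          rw [Algebra.algebraMap_eq_smul_one, map_smul]
          rw [mul_smul_comm, smul_mul_assoc, mul_one, hPP, ← Complex.coe_smul]
  -- selfadjoint case
  have hsamem : ∀ a : A, IsSelfAdjoint a → P * a * P ∈ Set.range α := by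
    intro a ha
    have h1 := hpos _ (CFC.posPart_nonneg a)
    have h2 := hpos _ (CFC.negPart_nonneg a)
    rw [← CFC.posPart_sub_negPart a ha, mul_sub, sub_mul]
    exact hsub _ _ h1 h2
  -- general well-definedness
  have hmem : ∀ a : A, P * a * P ∈ Set.range α := by
    intro a
    have h1 := hsamem (ℜ a : A) (ℜ a).2
    have h2 := hsmulR Complex.I _ (hsamem (ℑ a : A) (ℑ a).2)
    rw [← realPart_add_I_smul_imaginaryPart a, mul_add, add_mul, mul_smul_comm,
      smul_mul_assoc]
    exact haddR _ _ h1 h2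
  refine ⟨hmem, ?_⟩
  intro L hL
  have hPa : ∀ a : A, P * α a = α a := fun a => by rw [hP, ← map_mul, one_mul]
  have haP : ∀ a : A, α a * P = α a := fun a => by rw [hP, ← map_mul, mul_one]
  have hadd : ∀ a b : A, L (a + b) = L a + L b := by
    intro a b
    apply hinj
    rw [hL, map_add, hL, hL]
    noncomm_ring
  have hsmul : ∀ (c : ℂ) (a : A), L (c • a) = c • L a := by
    intro c a
    apply hinj
    rw [hL, map_smul, hL, mul_smul_comm, smul_mul_assoc]
  refine ⟨hadd, hsmul, ?_, ?_, ?_, ?_, ?_⟩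
  · -- continuity
    have hiso : Isometry α := NonUnitalStarAlgHom.isometry α hinj
    rw [hiso.isEmbedding.continuous_iff]
    have : (α ∘ L) = fun a => P * a * P := by
      ext a; exact hL a
    rw [this]
    exact (continuous_const.mul continuous_id).mul continuous_const
  · -- positivity
    intro a ha
    have hsaa : IsSelfAdjoint a := ha.isSelfAdjoint
    have hsa : IsSelfAdjoint (L a) := by
      apply hinj
      rw [map_star, hL]
      simp [star_mul, hPstar, hsaa.star_eq, mul_assoc]
    rw [StarOrderedRing.nonneg_iff_spectrum_nonneg (R := ℝ) (L a) hsa]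
    intro x hx
    rw [← hsa.map_spectrum_real α hinj, hL] at hx
    have h0 : 0 ≤ P * a * P := by simpa [hPstar] using star_left_conjugate_nonneg ha P
    exact spectrum_nonneg_of_nonneg h0 hx
  · -- transfer identity
    intro a b
    apply hinj
    rw [hL, map_mul, hL]
    conv_lhs => rw [← mul_assoc, hPa, ← haP a]
    noncomm_ring
  · -- non-degeneracy
    intro a
    rw [hL, hPa, haP]
  · -- unitality
    apply hinj
    rw [hL, mul_one, hPP]
end

section
/- For the Markov shift (Ω, σ) with σ surjective (no zero columns of 𝒜), the averaging operator E : C(Ω) → C(Ω) defined by E(f)(ξ) = (1/#σ⁻¹({σ(ξ)})) · Σ_{η : σ(η) = σ(ξ)} f(η) is well defined (E(f) is continuous), positive, and is a conditional expectation from C(Ω) onto the range of α(f) = f∘σ: it is α(C(Ω))-bimodule linear, idempotent, and restricts to the identity on α(C(Ω)). -/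
open scoped ComplexOrder

/-- The one-sided Markov shift space of a `{0,1}` transition matrix `𝒜`. -/
abbrev MarkovOmega (n : ℕ) (𝒜 : Fin n → Fin n → ℕ) : Type :=
  {ξ : ℕ → Fin n // ∀ i, 𝒜 (ξ i) (ξ (i + 1)) = 1}

/-- The shift map `σ (ξ₁, ξ₂, …) = (ξ₂, ξ₃, …)`. -/
def markovShift {n : ℕ} {𝒜 : Fin n → Fin n → ℕ} (ξ : MarkovOmega n 𝒜) : MarkovOmega n 𝒜 :=
  ⟨fun i => ξ.1 (i + 1), fun i => ξ.2 (i + 1)⟩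

/-- The shift map as a continuous map. -/
def markovShiftCM (n : ℕ) (𝒜 : Fin n → Fin n → ℕ) :
    C(MarkovOmega n 𝒜, MarkovOmega n 𝒜) :=
  ⟨markovShift, by
    apply Continuous.subtype_mk
    exact continuous_pi fun i => (continuous_apply (i + 1)).comp continuous_subtype_val⟩

/-- The value of the averaging operator: the mean of `f` over the fiber of `σ` through `σ ξ`. -/
noncomputable def markovAverage {n : ℕ} {𝒜 : Fin n → Fin n → ℕ}
    (f : C(MarkovOmega n 𝒜, ℂ)) (ξ : MarkovOmega n 𝒜) : ℂ :=
  (Nat.card {η : MarkovOmega n 𝒜 // markovShift η = markovShift ξ} : ℂ)⁻¹ *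
    ∑' η : {η : MarkovOmega n 𝒜 // markovShift η = markovShift ξ}, f η.1

namespace MarkovAux

variable {n : ℕ} {𝒜 : Fin n → Fin n → ℕ}

/-- Prepend a letter `a` to `ω` (falling back to some admissible predecessor when
`a` is not admissible). -/
noncomputable def cons (hcol : ∀ j, ∃ i, 𝒜 i j = 1) (a : Fin n) (ω : MarkovOmega n 𝒜) : MarkovOmega n 𝒜 :=
  ⟨fun i => match i with
    | 0 => if 𝒜 a (ω.1 0) = 1 then a else Classical.choose (hcol (ω.1 0))
    | i + 1 => ω.1 i,
   by
    intro i
    match i with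
    | 0 =>
      show 𝒜 (if 𝒜 a (ω.1 0) = 1 then a else _) (ω.1 0) = 1
      split
      · assumption
      · exact Classical.choose_spec (hcol (ω.1 0))
    | i + 1 => exact ω.2 i⟩

lemma shift_cons (hcol : ∀ j, ∃ i, 𝒜 i j = 1) (a : Fin n) (ω : MarkovOmega n 𝒜) :
    markovShift (cons hcol a ω) = ω :=
  Subtype.ext (funext fun _ => rfl)

lemma cons_head (hcol : ∀ j, ∃ i, 𝒜 i j = 1) {a : Fin n} {ω : MarkovOmega n 𝒜}
    (h : 𝒜 a (ω.1 0) = 1) : (cons hcol a ω).1 0 = a := if_pos h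

/-- Number of admissible predecessors of a letter `k`. -/
def N (𝒜 : Fin n → Fin n → ℕ) (k : Fin n) : ℕ :=
  (Finset.univ.filter fun a => 𝒜 a k = 1).card

lemma N_pos (hcol : ∀ j, ∃ i, 𝒜 i j = 1) (k : Fin n) : 0 < N 𝒜 k := by
  obtain ⟨a, ha⟩ := hcol k
  exact Finset.card_pos.2 ⟨a, Finset.mem_filter.2 ⟨Finset.mem_univ a, ha⟩⟩

/-- The fiber of `σ` through `σ ξ` is equivalent to the admissible first letters. -/
noncomputable def fiberEquiv (hcol : ∀ j, ∃ i, 𝒜 i j = 1) (ξ : MarkovOmega n 𝒜) :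
    {η : MarkovOmega n 𝒜 // markovShift η = markovShift ξ} ≃
      {a : Fin n // 𝒜 a (ξ.1 1) = 1} where
  toFun η := ⟨η.1.1 0, by
    have h1 : η.1.1 1 = ξ.1 1 := congrFun (congrArg Subtype.val η.2) 0
    have := η.1.2 0
    rwa [h1] at this⟩
  invFun a := ⟨cons hcol a.1 (markovShift ξ), shift_cons hcol a.1 (markovShift ξ)⟩
  left_inv η := by
    apply Subtype.ext
    apply Subtype.ext
    funext i
    match i with
    | 0 =>
      have h1 : η.1.1 1 = ξ.1 1 := congrFun (congrArg Subtype.val η.2) 0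
      have h : 𝒜 (η.1.1 0) ((markovShift ξ).1 0) = 1 := by
        have := η.1.2 0; rwa [h1] at this
      exact cons_head hcol h
    | i + 1 => exact (congrFun (congrArg Subtype.val η.2) i).symm
  right_inv a := by
    apply Subtype.ext
    exact cons_head hcol a.2

/-- The closed formula for `markovAverage`, as a function of `σ ξ`. -/
noncomputable def avgFun (hcol : ∀ j, ∃ i, 𝒜 i j = 1) (f : C(MarkovOmega n 𝒜, ℂ))
    (ω : MarkovOmega n 𝒜) : ℂ :=
  (N 𝒜 (ω.1 0) : ℂ)⁻¹ *
    ∑ a : Fin n, (if 𝒜 a (ω.1 0) = 1 then (1 : ℂ) else 0) * f (cons hcol a ω)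

lemma avg_eq (hcol : ∀ j, ∃ i, 𝒜 i j = 1) (f : C(MarkovOmega n 𝒜, ℂ)) (ξ : MarkovOmega n 𝒜) :
    markovAverage f ξ = avgFun hcol f (markovShift ξ) := by
  unfold markovAverage avgFun
  have hcard : Nat.card {η : MarkovOmega n 𝒜 // markovShift η = markovShift ξ}
      = N 𝒜 (ξ.1 1) := by
    rw [Nat.card_congr (fiberEquiv hcol ξ), Nat.card_eq_fintype_card, Fintype.card_subtype]
    rfl
  have hk : (markovShift ξ).1 0 = ξ.1 1 := rfl
  rw [hcard, hk]
  congr 1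
  rw [← Equiv.tsum_eq (fiberEquiv hcol ξ).symm (fun η => f η.1), tsum_fintype]
  calc (∑ b : {a : Fin n // 𝒜 a (ξ.1 1) = 1}, f ((fiberEquiv hcol ξ).symm b).1)
      = ∑ b : {a : Fin n // 𝒜 a (ξ.1 1) = 1}, f (cons hcol b.1 (markovShift ξ)) := rfl
    _ = ∑ a ∈ Finset.univ.filter fun a => 𝒜 a (ξ.1 1) = 1,
          f (cons hcol a (markovShift ξ)) :=
        (Finset.sum_subtype (p := fun a => 𝒜 a (ξ.1 1) = 1)
          (Finset.univ.filter fun a => 𝒜 a (ξ.1 1) = 1)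
          (fun x => by simp)
          (fun a => f (cons hcol a (markovShift ξ)))).symm
    _ = ∑ a : Fin n, (if 𝒜 a (ξ.1 1) = 1 then (1 : ℂ) else 0)
          * f (cons hcol a (markovShift ξ)) := by
        rw [Finset.sum_filter]
        refine Finset.sum_congr rfl fun a _ => ?_
        by_cases h : 𝒜 a (ξ.1 1) = 1
        · rw [if_pos h, if_pos h, one_mul]
        · rw [if_neg h, if_neg h, zero_mul]

lemma cont_through_head {β : Type*} [TopologicalSpace β] (g : Fin n → β) :
    Continuous fun ω : MarkovOmega n 𝒜 => g (ω.1 0) :=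
  Continuous.comp (g := g) continuous_of_discreteTopology
    ((continuous_apply 0).comp continuous_subtype_val)

lemma cont_cons (hcol : ∀ j, ∃ i, 𝒜 i j = 1) (a : Fin n) :
    Continuous (cons hcol a : MarkovOmega n 𝒜 → MarkovOmega n 𝒜) := by
  apply Continuous.subtype_mk
  apply continuous_pi
  intro i
  match i with
  | 0 =>
    exact cont_through_head fun k : Fin n =>
      if 𝒜 a k = 1 then a else Classical.choose (hcol k)
  | i + 1 => exact (continuous_apply i).comp continuous_subtype_val

lemma cont_avgFun (hcol : ∀ j, ∃ i, 𝒜 i j = 1) (f : C(MarkovOmega n 𝒜, ℂ)) :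
    Continuous (avgFun hcol f) := by
  apply Continuous.mul
  · exact cont_through_head fun k : Fin n => ((N 𝒜 k : ℂ))⁻¹
  · apply continuous_finset_sum
    intro a _
    apply Continuous.mul
    · exact cont_through_head fun k : Fin n => if 𝒜 a k = 1 then (1:ℂ) else 0
    · exact f.continuous.comp (cont_cons hcol a)

lemma sum_indicator (k : Fin n) :
    ∑ a : Fin n, (if 𝒜 a k = 1 then (1 : ℂ) else 0) = (N 𝒜 k : ℂ) := by
  rw [Finset.sum_boole]
  norm_cast

end MarkovAux

/-- For the Markov shift with surjective `σ`, the averaging operator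
`E(f)(ξ) = (1/#σ⁻¹({σ ξ})) ∑_{σ η = σ ξ} f(η)` is well defined (continuous), positive, and is a
conditional expectation onto the range of `α : f ↦ f ∘ σ`: it is `α(C(Ω))`-bimodule linear,
idempotent, and restricts to the identity on `α(C(Ω))`. -/
theorem markov_conditional_expectation
    {n : ℕ} (𝒜 : Fin n → Fin n → ℕ)
    (h01 : ∀ i j, 𝒜 i j = 0 ∨ 𝒜 i j = 1)
    (hrow : ∀ i, ∃ j, 𝒜 i j = 1)
    (hcol : ∀ j, ∃ i, 𝒜 i j = 1) :
    -- well-definedness: the averaging formula yields a continuous function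
    (∀ f : C(MarkovOmega n 𝒜, ℂ), Continuous (markovAverage f)) ∧
    -- and any `E` given by this formula is a positive conditional expectation onto `range α`:
    (∀ E : C(MarkovOmega n 𝒜, ℂ) → C(MarkovOmega n 𝒜, ℂ),
      (∀ f ξ, E f ξ = markovAverage f ξ) →
      -- positive
      (∀ f, (∀ ξ, 0 ≤ f ξ) → ∀ ξ, 0 ≤ E f ξ) ∧
      -- identity on the range of `α` and mapping into it (hence idempotent)
      (∀ g : C(MarkovOmega n 𝒜, ℂ), E (g.comp (markovShiftCM n 𝒜)) = g.comp (markovShiftCM n 𝒜)) ∧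
      (∀ f, ∃ g : C(MarkovOmega n 𝒜, ℂ), E f = g.comp (markovShiftCM n 𝒜)) ∧
      (∀ f, E (E f) = E f) ∧
      -- `α(C(Ω))`-bimodule linear
      (∀ f : C(MarkovOmega n 𝒜, ℂ), ∀ g : C(MarkovOmega n 𝒜, ℂ),
        E (f * g.comp (markovShiftCM n 𝒜)) = E f * g.comp (markovShiftCM n 𝒜) ∧
        E (g.comp (markovShiftCM n 𝒜) * f) = g.comp (markovShiftCM n 𝒜) * E f)) := by
  classical
  open MarkovAux in
  have Nne : ∀ k : Fin n, (N 𝒜 k : ℂ) ≠ 0 := fun k =>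
    Nat.cast_ne_zero.2 (N_pos hcol k).ne'
  have hcont : ∀ f : C(MarkovOmega n 𝒜, ℂ), Continuous (markovAverage f) := by
    intro f
    have h : markovAverage f = fun ξ => avgFun hcol f (markovShift ξ) :=
      funext (avg_eq hcol f)
    rw [h]
    exact (cont_avgFun hcol f).comp (markovShiftCM n 𝒜).continuous
  refine ⟨hcont, ?_⟩
  intro E hE
  -- identity on range of α, pointwise
  have hId : ∀ (g : C(MarkovOmega n 𝒜, ℂ)) (ξ : MarkovOmega n 𝒜),
      markovAverage (g.comp (markovShiftCM n 𝒜)) ξ = g (markovShift ξ) := by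
    intro g ξ
    rw [avg_eq hcol]
    unfold avgFun
    have hterm : ∀ a : Fin n,
        (g.comp (markovShiftCM n 𝒜)) (cons hcol a (markovShift ξ)) = g (markovShift ξ) := by
      intro a
      show g (markovShift (cons hcol a (markovShift ξ))) = g (markovShift ξ)
      rw [shift_cons]
    simp only [hterm]
    rw [← Finset.sum_mul, sum_indicator, inv_mul_cancel_left₀ (Nne _)]
  -- E f lies in the range of α
  have hRange : ∀ f : C(MarkovOmega n 𝒜, ℂ), ∃ g : C(MarkovOmega n 𝒜, ℂ),
      E f = g.comp (markovShiftCM n 𝒜) := by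
    intro f
    refine ⟨⟨avgFun hcol f, cont_avgFun hcol f⟩, ?_⟩
    ext ξ
    rw [hE f ξ, avg_eq hcol]
    rfl
  have hIdCM : ∀ g : C(MarkovOmega n 𝒜, ℂ),
      E (g.comp (markovShiftCM n 𝒜)) = g.comp (markovShiftCM n 𝒜) := by
    intro g
    ext ξ
    rw [hE _ ξ, hId g ξ]
    rfl
  -- right module property, pointwise
  have hMul : ∀ (f g : C(MarkovOmega n 𝒜, ℂ)) (ξ : MarkovOmega n 𝒜),
      markovAverage (f * g.comp (markovShiftCM n 𝒜)) ξ
        = markovAverage f ξ * g (markovShift ξ) := by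
    intro f g ξ
    rw [avg_eq hcol, avg_eq hcol]
    unfold avgFun
    have hterm : ∀ a : Fin n,
        (f * g.comp (markovShiftCM n 𝒜)) (cons hcol a (markovShift ξ))
          = f (cons hcol a (markovShift ξ)) * g (markovShift ξ) := by
      intro a
      show f (cons hcol a (markovShift ξ)) * g (markovShift (cons hcol a (markovShift ξ))) = _
      rw [shift_cons]
    simp only [hterm, ← mul_assoc]
    rw [← Finset.sum_mul, ← mul_assoc]
  refine ⟨?_, hIdCM, hRange, ?_, ?_⟩
  · -- positivity
    intro f hf ξ
    rw [hE f ξ, avg_eq hcol]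
    unfold avgFun
    apply mul_nonneg
    · rw [show ((N 𝒜 ((markovShift ξ).1 0) : ℂ))⁻¹
          = (((N 𝒜 ((markovShift ξ).1 0) : ℝ)⁻¹ : ℝ) : ℂ) by push_cast; ring,
        Complex.zero_le_real]
      positivity
    · refine Finset.sum_nonneg fun a _ => mul_nonneg ?_ (hf _)
      by_cases h : 𝒜 a ((markovShift ξ).1 0) = 1
      · rw [if_pos h]; exact zero_le_one
      · rw [if_neg h]
  · -- idempotent
    intro f
    obtain ⟨g, hg⟩ := hRange f
    rw [hg, hIdCM g]
  · -- bimodule linearity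
    intro f g
    constructor
    · ext ξ
      rw [ContinuousMap.mul_apply, hE _ ξ, hE f ξ, hMul f g ξ]
      rfl
    · rw [mul_comm (g.comp (markovShiftCM n 𝒜)) f, mul_comm (g.comp (markovShiftCM n 𝒜)) (E f)]
      ext ξ
      rw [ContinuousMap.mul_apply, hE _ ξ, hE f ξ, hMul f g ξ]
      rfl
end
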